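/- arXiv:2508.12159 — 3 statements merged into one kernel-verified Lean document; each statement's English description precedes it below -/
import Mathlib

section
/- Let A, B > 0 with B < 2·(A/3)^{3/2} and let Y₊ be the largest root of A·Y² − B·Y³ = 1. For each integer m ≥ 1, the m-th eigenvalue of the second-variation quadratic form B[g,g] on even Fourier modes g = √2·cos(2πmx) equals (4πm/Y₊²)·coth(2πm Y₊) − B, and these eigenvalues form a strictly increasing sequence in m. -/
set_option autoImplicit false

open Set Real MeasureTheory

/-!
The harmonic extension of `√2 cos (c x)` to the strip `0 < y < Y` is
`V = sinh (c y) / sinh (c Y) · √2 cos (c x)`, and `|∇V|² = c² / sinh² (c Y) · (cosh 2cy + cos 2cx)`.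
When `sin 2c = 0` the `cos`-term integrates to zero over `0 < x < 1`, so the Dirichlet energy is
`c coth (c Y)`, while the mode has unit `L²` norm. For `c = 2πm` the eigenvalue is therefore
`(2/Y₊³) · u coth u - B` with `u = 2πm Y₊`, and `u coth u` is strictly increasing on `(0, ∞)`.
Finally `Y₊ > 0`: the cubic `A Y² - B Y³` takes the value `4A³/(27B²) > 1` at its critical point
`2A/(3B)`, so it crosses `1` on the positive axis.
-/

theorem sq_lt_of_lt_two_mul_rpow {A B : ℝ} (hA : 0 ≤ A) (hB : 0 ≤ B)
    (h : B < 2 * (A / 3) ^ ((3 : ℝ) / 2)) : 27 * B ^ 2 < 4 * A ^ 3 := by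
  have hsq : ((A / 3) ^ ((3 : ℝ) / 2)) ^ 2 = (A / 3) ^ 3 := by
    rw [← rpow_natCast, ← rpow_mul (by positivity)]
    norm_num
  have := pow_lt_pow_left₀ h hB two_ne_zero
  rw [mul_pow, hsq] at this
  linarith

theorem exists_pos_root_of_sq_lt {A B : ℝ} (hA : 0 < A) (hB : 0 < B)
    (hdisc : 27 * B ^ 2 < 4 * A ^ 3) : ∃ Y, 0 < Y ∧ A * Y ^ 2 - B * Y ^ 3 = 1 := by
  set Y₀ := 2 * A / (3 * B)
  have hY₀ : 0 < Y₀ := by positivity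
  have hpeak : 1 < A * Y₀ ^ 2 - B * Y₀ ^ 3 := by
    have : A * Y₀ ^ 2 - B * Y₀ ^ 3 = 4 * A ^ 3 / (27 * B ^ 2) := by
      simp only [Y₀]; field_simp; ring
    rw [this, one_lt_div (by positivity)]
    exact hdisc
  obtain ⟨Y, hY, hroot⟩ := intermediate_value_Icc hY₀.le
    (f := fun Y => A * Y ^ 2 - B * Y ^ 3) (by fun_prop) ⟨by norm_num, hpeak.le⟩
  refine ⟨Y, hY.1.lt_of_ne ?_, hroot⟩
  rintro rfl
  norm_num at hroot

theorem strictMonoOn_mul_cosh_div_sinh :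
    StrictMonoOn (fun u : ℝ => u * cosh u / sinh u) (Ioi 0) := by
  refine strictMonoOn_of_deriv_pos (convex_Ioi 0) ?_ fun u hu => ?_
  · exact ContinuousOn.div (by fun_prop) (by fun_prop) fun u hu => (sinh_pos_iff.2 hu).ne'
  rw [interior_Ioi] at hu
  have hsinh : 0 < sinh u := sinh_pos_iff.2 hu
  have hderiv : HasDerivAt (fun u : ℝ => u * cosh u / sinh u)
      (((1 * cosh u + u * sinh u) * sinh u - u * cosh u * cosh u) / sinh u ^ 2) u :=
    ((hasDerivAt_id u).mul (hasDerivAt_cosh u)).div (hasDerivAt_sinh u) hsinh.ne'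
  rw [hderiv.deriv]
  refine div_pos ?_ (by positivity)
  -- The numerator is `sinh u cosh u - u`, positive since `u < sinh u` and `1 ≤ cosh u`.
  nlinarith [self_lt_sinh_iff.2 hu, one_le_cosh u, cosh_sq u]

theorem integral_cos_mul_eq_zero {k : ℝ} (hk : k ≠ 0) (hs : sin k = 0) :
    ∫ x in (0 : ℝ)..1, cos (k * x) = 0 := by
  simp [intervalIntegral.integral_comp_mul_left (fun x => cos x) hk, hs]

theorem integral_cosh_mul {k : ℝ} (hk : k ≠ 0) (b : ℝ) :
    ∫ y in (0 : ℝ)..b, cosh (k * y) = sinh (k * b) / k := by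
  rw [intervalIntegral.integral_comp_mul_left (fun y => cosh y) hk,
    intervalIntegral.integral_eq_sub_of_hasDerivAt (fun y _ => hasDerivAt_sinh y)
      (continuous_cosh.intervalIntegrable _ _)]
  simp [div_eq_inv_mul]

theorem setIntegral_Ioo_prod_Ioo {f : ℝ × ℝ → ℝ} (hf : Continuous f) {a b c d : ℝ}
    (hab : a ≤ b) (hcd : c ≤ d) :
    ∫ p in Ioo a b ×ˢ Ioo c d, f p = ∫ x in a..b, ∫ y in c..d, f (x, y) := by
  have hint : IntegrableOn f (Ioo a b ×ˢ Ioo c d) (volume.prod volume) :=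
    (hf.continuousOn.integrableOn_compact (isCompact_Icc.prod isCompact_Icc)).mono_set
      (prod_mono Ioo_subset_Icc_self Ioo_subset_Icc_self)
  rw [Measure.volume_eq_prod, setIntegral_prod f hint, intervalIntegral.integral_of_le hab,
    integral_Ioc_eq_integral_Ioo]
  congr 1 with x
  rw [intervalIntegral.integral_of_le hcd, integral_Ioc_eq_integral_Ioo]

theorem integral_sqrt_two_mul_cos_sq {c : ℝ} (hc : c ≠ 0) (hs : sin (2 * c) = 0) :
    ∫ x in (0 : ℝ)..1, (√2 * cos (c * x)) ^ 2 = 1 := by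
  have hsq (x : ℝ) : (√2 * cos (c * x)) ^ 2 = 1 + cos (2 * c * x) := by
    rw [mul_pow, sq_sqrt zero_le_two, cos_sq, mul_assoc]
    ring
  simp only [hsq]
  rw [intervalIntegral.integral_add intervalIntegrable_const
    ((by fun_prop : Continuous fun x => cos (2 * c * x)).intervalIntegrable _ _),
    integral_cos_mul_eq_zero (mul_ne_zero two_ne_zero hc) hs]
  simp

theorem energy_density_mode (w c Y x y : ℝ) :
    w * ((deriv (fun s => sinh (c * y) / sinh (c * Y) * (√2 * cos (c * s))) x) ^ 2
      + (deriv (fun t => sinh (c * t) / sinh (c * Y) * (√2 * cos (c * x))) y) ^ 2)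
    = w * c ^ 2 / sinh (c * Y) ^ 2 * (cosh (2 * c * y) + cos (2 * c * x)) := by
  have hlin (z : ℝ) : HasDerivAt (fun z => c * z) c z := by
    simpa using (hasDerivAt_id z).const_mul c
  have hx : HasDerivAt (fun s => sinh (c * y) / sinh (c * Y) * (√2 * cos (c * s)))
      (sinh (c * y) / sinh (c * Y) * (√2 * (-sin (c * x) * c))) x :=
    ((hlin x).cos.const_mul _).const_mul _
  have hy : HasDerivAt (fun t => sinh (c * t) / sinh (c * Y) * (√2 * cos (c * x)))
      (cosh (c * y) * c / sinh (c * Y) * (√2 * cos (c * x))) y :=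
    ((hlin y).sinh.div_const _).mul_const _
  rw [hx.deriv, hy.deriv, mul_assoc 2 c x, mul_assoc 2 c y, cosh_two_mul, cos_two_mul]
  simp only [mul_pow, div_pow, neg_mul, neg_sq, sq_sqrt zero_le_two, sin_sq, cosh_sq]
  ring

theorem setIntegral_energy_mode {w c Y : ℝ} (hc : c ≠ 0) (hs : sin (2 * c) = 0) (hY : 0 < Y) :
    ∫ p in Ioo (0 : ℝ) 1 ×ˢ Ioo 0 Y,
      w * ((deriv (fun s => sinh (c * p.2) / sinh (c * Y) * (√2 * cos (c * s))) p.1) ^ 2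
        + (deriv (fun t => sinh (c * t) / sinh (c * Y) * (√2 * cos (c * p.1))) p.2) ^ 2)
    = w * c * (cosh (c * Y) / sinh (c * Y)) := by
  have h2c : 2 * c ≠ 0 := mul_ne_zero two_ne_zero hc
  have hS : sinh (c * Y) ≠ 0 := sinh_ne_zero.2 (mul_ne_zero hc hY.ne')
  simp only [energy_density_mode]
  rw [setIntegral_Ioo_prod_Ioo (by fun_prop) zero_le_one hY.le]
  set K := w * c ^ 2 / sinh (c * Y) ^ 2
  have hinner (x : ℝ) : ∫ y in (0 : ℝ)..Y, K * (cosh (2 * c * y) + cos (2 * c * x))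
      = K * (sinh (2 * c * Y) / (2 * c)) + K * Y * cos (2 * c * x) := by
    rw [intervalIntegral.integral_const_mul, intervalIntegral.integral_add
      ((by fun_prop : Continuous fun y => cosh (2 * c * y)).intervalIntegrable _ _)
      intervalIntegrable_const, integral_cosh_mul h2c, intervalIntegral.integral_const]
    simp only [sub_zero, smul_eq_mul]
    ring
  simp only [hinner]
  rw [intervalIntegral.integral_add intervalIntegrable_const
    ((by fun_prop : Continuous fun x => K * Y * cos (2 * c * x)).intervalIntegrable _ _),
    intervalIntegral.integral_const, intervalIntegral.integral_const_mul,
    integral_cos_mul_eq_zero h2c hs, mul_assoc 2 c Y, sinh_two_mul]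
  simp only [K, smul_eq_mul, sub_zero, mul_zero, add_zero, one_mul]
  field_simp

theorem second_variation_eigenvalues_general (A B Yp : ℝ) (hA : 0 < A) (hB : 0 < B)
    (hcond : B < 2 * (A / 3) ^ ((3 : ℝ) / 2))
    (hmax : ∀ Y : ℝ, A * Y ^ 2 - B * Y ^ 3 = 1 → Y ≤ Yp) :
    (∀ m : ℕ, 1 ≤ m →
      (∫ p in (Ioo (0:ℝ) 1 ×ˢ Ioo 0 Yp),
          (2 / Yp ^ 2) *
          ((deriv (fun s => Real.sinh (2 * π * m * p.2) / Real.sinh (2 * π * m * Yp)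
              * (Real.sqrt 2 * Real.cos (2 * π * m * s))) p.1) ^ 2
            + (deriv (fun t => Real.sinh (2 * π * m * t) / Real.sinh (2 * π * m * Yp)
              * (Real.sqrt 2 * Real.cos (2 * π * m * p.1))) p.2) ^ 2))
        - B * (∫ x in (0:ℝ)..1, (Real.sqrt 2 * Real.cos (2 * π * m * x)) ^ 2)
      = 4 * π * m / Yp ^ 2 * (Real.cosh (2 * π * m * Yp) / Real.sinh (2 * π * m * Yp)) - B) ∧
    (∀ m m' : ℕ, 1 ≤ m → m < m' →
      4 * π * m / Yp ^ 2 * (Real.cosh (2 * π * m * Yp) / Real.sinh (2 * π * m * Yp)) - B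
        < 4 * π * m' / Yp ^ 2 * (Real.cosh (2 * π * m' * Yp) / Real.sinh (2 * π * m' * Yp)) - B) := by
  obtain ⟨Y, hY, hYroot⟩ :=
    exists_pos_root_of_sq_lt hA hB (sq_lt_of_lt_two_mul_rpow hA.le hB.le hcond)
  have hYp : 0 < Yp := hY.trans_le (hmax Y hYroot)
  refine ⟨fun m hm => ?_, fun m m' hm hmm' => ?_⟩
  · have hc : 2 * π * m ≠ 0 := (mul_pos two_pi_pos (by exact_mod_cast hm)).ne'
    have hs : sin (2 * (2 * π * m)) = 0 := sin_eq_zero_iff.2 ⟨4 * m, by push_cast; ring⟩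
    rw [setIntegral_energy_mode hc hs hYp, integral_sqrt_two_mul_cos_sq hc hs]
    ring
  · have hscaled (n : ℕ) : 4 * π * n / Yp ^ 2 * (cosh (2 * π * n * Yp) / sinh (2 * π * n * Yp))
        = 2 / Yp ^ 3 * (2 * π * n * Yp * cosh (2 * π * n * Yp) / sinh (2 * π * n * Yp)) := by
      field_simp
      ring
    have hu : 0 < 2 * π * m * Yp := by
      have : (0 : ℝ) < m := by exact_mod_cast hm
      positivity
    have hlt : 2 * π * m * Yp < 2 * π * m' * Yp := by gcongr
    rw [hscaled m, hscaled m']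
    gcongr 2 / Yp ^ 3 * ?_ - B
    exact strictMonoOn_mul_cosh_div_sinh hu (hu.trans hlt) hlt

theorem second_variation_eigenvalues (A B Yp : ℝ) (hA : 0 < A) (hB : 0 < B)
    (hcond : B < 2 * (A / 3) ^ ((3 : ℝ) / 2))
    (hroot : A * Yp ^ 2 - B * Yp ^ 3 = 1)
    (hmax : ∀ Y : ℝ, A * Y ^ 2 - B * Y ^ 3 = 1 → Y ≤ Yp) :
    (∀ m : ℕ, 1 ≤ m →
      (∫ p in (Ioo (0:ℝ) 1 ×ˢ Ioo 0 Yp),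
          (2 / Yp ^ 2) *
          ((deriv (fun s => Real.sinh (2 * π * m * p.2) / Real.sinh (2 * π * m * Yp)
              * (Real.sqrt 2 * Real.cos (2 * π * m * s))) p.1) ^ 2
            + (deriv (fun t => Real.sinh (2 * π * m * t) / Real.sinh (2 * π * m * Yp)
              * (Real.sqrt 2 * Real.cos (2 * π * m * p.1))) p.2) ^ 2))
        - B * (∫ x in (0:ℝ)..1, (Real.sqrt 2 * Real.cos (2 * π * m * x)) ^ 2)
      = 4 * π * m / Yp ^ 2 * (Real.cosh (2 * π * m * Yp) / Real.sinh (2 * π * m * Yp)) - B) ∧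
    (∀ m m' : ℕ, 1 ≤ m → m < m' →
      4 * π * m / Yp ^ 2 * (Real.cosh (2 * π * m * Yp) / Real.sinh (2 * π * m * Yp)) - B
        < 4 * π * m' / Yp ^ 2 * (Real.cosh (2 * π * m' * Yp) / Real.sinh (2 * π * m' * Yp)) - B) :=
  second_variation_eigenvalues_general A B Yp hA hB hcond hmax
end

section
/- Let A, B > 0 with B < 2·(A/3)^{3/2}, and suppose 2·(A/B − Y₊)·2π·coth(2π Y₊) < 1, where Y₊ is the largest root of A·Y² − B·Y³ = 1. Then both eigenvalues 2/Y₊³ − B and (4π/Y₊²)·coth(2π Y₊) − B are negative (so the flat solution U₊ has Morse index at least 2 for the second variation form). -/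
set_option autoImplicit false

open Set Real

/- On the curve `A Y² − B Y³ = 1` one has `A/B − Y = 1/(B Y²)`, so the instability condition
`2 (A/B − Y₊) k < 1` becomes `2k/Y₊² < B`; with `k = 2π coth(2π Y₊)` this is the second eigenvalue.
For the first one, `3 B Y₊ > 2 A` turns `A Y₊² = 1 + B Y₊³` into `B Y₊³ > 2`. -/

section RootCurve

variable {A B Y : ℝ}

theorem ne_zero_of_root (hroot : A * Y ^ 2 - B * Y ^ 3 = 1) : Y ≠ 0 := by
  rintro rfl
  norm_num at hroot

theorem two_lt_mul_cube_of_root (hB : 0 < B) (hroot : A * Y ^ 2 - B * Y ^ 3 = 1)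
    (hY : 2 / 3 * (A / B) < Y) : 2 < B * Y ^ 3 := by
  have h2A : 2 * A < 3 * (B * Y) := by
    rw [mul_div_assoc', div_lt_iff₀ hB] at hY
    linarith
  have hY2 : 0 < Y ^ 2 := sq_pos_of_ne_zero (ne_zero_of_root hroot)
  nlinarith [mul_lt_mul_of_pos_right h2A hY2]

theorem two_div_cube_sub_neg_of_root (hB : 0 < B) (hroot : A * Y ^ 2 - B * Y ^ 3 = 1)
    (hY : 2 / 3 * (A / B) < Y) : 2 / Y ^ 3 - B < 0 := by
  have hBY3 := two_lt_mul_cube_of_root hB hroot hY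
  have hY3 : 0 < Y ^ 3 := pos_of_mul_pos_right (by linarith) hB.le
  rw [sub_neg, div_lt_iff₀ hY3]
  exact hBY3

theorem div_sub_eq_one_div_of_root (hB : B ≠ 0) (hroot : A * Y ^ 2 - B * Y ^ 3 = 1) :
    A / B - Y = 1 / (B * Y ^ 2) := by
  have hY := ne_zero_of_root hroot
  field_simp
  linear_combination hroot

theorem two_mul_div_sq_lt_of_root {k : ℝ} (hB : 0 < B) (hroot : A * Y ^ 2 - B * Y ^ 3 = 1)
    (hk : 2 * (A / B - Y) * k < 1) : 2 * k / Y ^ 2 < B := by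
  have hBY2 : 0 < B * Y ^ 2 := mul_pos hB (sq_pos_of_ne_zero (ne_zero_of_root hroot))
  rw [div_sub_eq_one_div_of_root hB.ne' hroot, mul_one_div, div_mul_eq_mul_div,
    div_lt_one hBY2] at hk
  rw [div_lt_iff₀ (pos_of_mul_pos_right hBY2 hB.le)]
  linarith

end RootCurve

theorem flat_solution_morse_index_two_general (A B Yp : ℝ) (hB : 0 < B)
    (hroot : A * Yp ^ 2 - B * Yp ^ 3 = 1)
    (hYp : Yp ∈ Ioo (2 / 3 * (A / B)) (A / B))
    (hineq : 2 * (A / B - Yp) * (2 * π)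
        * (Real.cosh (2 * π * Yp) / Real.sinh (2 * π * Yp)) < 1) :
    2 / Yp ^ 3 - B < 0 ∧
    4 * π / Yp ^ 2 * (Real.cosh (2 * π * Yp) / Real.sinh (2 * π * Yp)) - B < 0 := by
  refine ⟨two_div_cube_sub_neg_of_root hB hroot hYp.1, ?_⟩
  rw [mul_assoc] at hineq
  have hsecond := two_mul_div_sq_lt_of_root hB hroot hineq
  rw [sub_neg]
  convert hsecond using 1
  ring

theorem flat_solution_morse_index_two (A B Yp : ℝ) (hA : 0 < A) (hB : 0 < B)
    (hcond : B < 2 * (A / 3) ^ ((3 : ℝ) / 2))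
    (hroot : A * Yp ^ 2 - B * Yp ^ 3 = 1)
    (hmax : ∀ Y : ℝ, A * Y ^ 2 - B * Y ^ 3 = 1 → Y ≤ Yp)
    (hYp : Yp ∈ Ioo (2 / 3 * (A / B)) (A / B))
    (hineq : 2 * (A / B - Yp) * (2 * π)
        * (Real.cosh (2 * π * Yp) / Real.sinh (2 * π * Yp)) < 1) :
    2 / Yp ^ 3 - B < 0 ∧
    4 * π / Yp ^ 2 * (Real.cosh (2 * π * Yp) / Real.sinh (2 * π * Yp)) - B < 0 :=
  flat_solution_morse_index_two_general A B Yp hB hroot hYp hineq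
end

section
/- Let u ∈ W^{1,2}(𝕋 × (0, T)) with u(x, 0) = 1 for a.e. x, and suppose E[u] is minimal among all such functions, where E[u] = ∫ (|∇u|² + χ_{u>0}·(A−By)₊). Then u is independent of x almost everywhere. (Key inequality: E[u] ≥ ∫ |u_x|² + inf over 1D profiles, so any minimizer has u_x = 0 a.e.) -/
set_option autoImplicit false

open Set MeasureTheory

/-!
Splitting `‖Du‖² ≥ u_x² + u_y²` and applying Fubini, `E[u] ≥ ∫ u_x² + ⨍ₓ e(u(x, ·))`, where
`e` is the one-dimensional energy of a vertical profile. Conversely, a profile `u(x₀, ·)`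
extended constantly in `x` is an admissible competitor of energy exactly `e(u(x₀, ·))`, so
minimality gives `E[u] ≤ e(u(x, ·))` for a.e. `x`, hence `E[u] ≤ ⨍ₓ e(u(x, ·))`. Thus
`∫ u_x² ≤ 0`, so `u_x = 0` a.e., and the fundamental theorem of calculus on a.e. horizontal line
gives `u(x, y) = u(0, y)`.
-/

-- `ℝ × ℝ` carries the sup norm, so `‖L‖ = |L (1, 0)| + |L (0, 1)|`, attained at a sign vector.
lemma sq_apply_add_sq_apply_le_opNorm_sq (L : ℝ × ℝ →L[ℝ] ℝ) :
    L (1, 0) ^ 2 + L (0, 1) ^ 2 ≤ ‖L‖ ^ 2 := by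
  set a := L (1, 0)
  set b := L (0, 1)
  have hL : L (SignType.sign a, SignType.sign b) = |a| + |b| := by
    rw [show ((SignType.sign a : ℝ), (SignType.sign b : ℝ)) =
      (SignType.sign a : ℝ) • ((1 : ℝ), (0 : ℝ)) + (SignType.sign b : ℝ) • ((0 : ℝ), (1 : ℝ)) by
        simp, map_add, map_smul, map_smul, smul_eq_mul, smul_eq_mul, sign_mul_self,
        sign_mul_self]
  have habs (c : ℝ) : |(SignType.sign c : ℝ)| ≤ 1 := by
    rcases lt_trichotomy c 0 with h | h | h <;> simp [h]
  have h : |a| + |b| ≤ ‖L‖ := by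
    calc |a| + |b| ≤ ‖L (SignType.sign a, SignType.sign b)‖ := by rw [hL]; exact le_abs_self _
      _ ≤ ‖L‖ * 1 := L.le_of_opNorm_le_of_le le_rfl (max_le (habs a) (habs b))
      _ = ‖L‖ := mul_one _
  nlinarith [abs_nonneg a, abs_nonneg b, sq_abs a, sq_abs b]

lemma norm_fderiv_comp_snd {g : ℝ → ℝ} {p : ℝ × ℝ} (hg : DifferentiableAt ℝ g p.2) :
    ‖fderiv ℝ (fun q : ℝ × ℝ => g q.2) p‖ = |deriv g p.2| := by
  rw [fderiv_fun_comp p hg differentiableAt_snd, fderiv_snd, ← Real.norm_eq_abs,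
    norm_deriv_eq_norm_fderiv]
  refine le_antisymm ?_ ?_
  · exact (ContinuousLinearMap.opNorm_comp_le _ _).trans
      (mul_le_of_le_one_right (norm_nonneg _) (ContinuousLinearMap.norm_snd_le ℝ ℝ ℝ))
  · refine ContinuousLinearMap.opNorm_le_bound _ (norm_nonneg _) fun z => ?_
    simpa using ((fderiv ℝ g p.2).comp (ContinuousLinearMap.snd ℝ ℝ ℝ)).le_opNorm (0, z)

lemma integrable_sq_apply_of_integrable_sq_norm {α E : Type*} [MeasurableSpace α] {μ : Measure α}
    [NormedAddCommGroup E] [NormedSpace ℝ E] {F : α → E →L[ℝ] ℝ} (hF : AEStronglyMeasurable F μ)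
    (hint : Integrable (fun a => ‖F a‖ ^ 2) μ) (w : E) :
    Integrable (fun a => F a w ^ 2) μ := by
  refine (hint.mul_const (‖w‖ ^ 2)).mono'
    (((ContinuousLinearMap.apply ℝ ℝ w).continuous.comp_aestronglyMeasurable hF).pow 2)
    (ae_of_all _ fun a => ?_)
  rw [norm_pow, ← mul_pow]
  exact pow_le_pow_left₀ (norm_nonneg _) ((F a).le_opNorm w) 2

lemma MeasureTheory.Integrable.ite_pos {α : Type*} [MeasurableSpace α] {μ : Measure α}
    {u f : α → ℝ} (hf : Integrable f μ) (hu : Measurable u) :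
    Integrable (fun a => if 0 < u a then f a else 0) μ := by
  have hpos : MeasurableSet {a | 0 < u a} := measurableSet_lt measurable_const hu
  exact (hf.indicator hpos).congr (ae_of_all _ fun a => by simp [Set.indicator_apply])

lemma DifferentiableAt.hasDerivAt_comp_prodMk_right {u : ℝ × ℝ → ℝ} {x y : ℝ}
    (hu : DifferentiableAt ℝ u (x, y)) :
    HasDerivAt (fun x => u (x, y)) (fderiv ℝ u (x, y) (1, 0)) x := by
  simpa [Function.comp_def] using
    hu.hasFDerivAt.comp_hasDerivAt x ((hasDerivAt_id x).prodMk (hasDerivAt_const x y))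

lemma DifferentiableAt.hasDerivAt_comp_prodMk_left {u : ℝ × ℝ → ℝ} {x y : ℝ}
    (hu : DifferentiableAt ℝ u (x, y)) :
    HasDerivAt (fun y => u (x, y)) (fderiv ℝ u (x, y) (0, 1)) y := by
  simpa [Function.comp_def] using
    hu.hasFDerivAt.comp_hasDerivAt y ((hasDerivAt_const y x).prodMk (hasDerivAt_id y))

lemma eq_of_hasDerivAt_of_ae_eq_zero {f f' : ℝ → ℝ} {a b : ℝ} (hab : a ≤ b)
    (hf : ∀ x ∈ Icc a b, HasDerivAt f (f' x) x) (h0 : ∀ᵐ x ∂volume.restrict (Ioc a b), f' x = 0) :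
    f b = f a := by
  have hint : IntervalIntegrable f' volume a b :=
    (intervalIntegrable_iff_integrableOn_Ioc_of_le hab).2
      ((integrable_zero _ _ _).congr (h0.mono fun _ hx => hx.symm))
  have hftc := intervalIntegral.integral_eq_sub_of_hasDerivAt
    (fun x hx => hf x (uIcc_of_le hab ▸ hx)) hint
  rw [intervalIntegral.integral_of_le hab, integral_eq_zero_of_ae h0] at hftc
  linarith

section Slicing

noncomputable def energy (P : ℝ → ℝ) (μ : Measure (ℝ × ℝ)) (u : ℝ × ℝ → ℝ) : ℝ :=
  ∫ p, (‖fderiv ℝ u p‖ ^ 2 + if 0 < u p then P p.2 else 0) ∂μ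

noncomputable def profileEnergy (P : ℝ → ℝ) (ν : Measure ℝ) (g : ℝ → ℝ) : ℝ :=
  ∫ y, (deriv g y ^ 2 + if 0 < g y then P y else 0) ∂ν

variable {P : ℝ → ℝ} {μ ν : Measure ℝ} {u : ℝ × ℝ → ℝ}

lemma energy_comp_snd [IsProbabilityMeasure μ] [SFinite ν] {g : ℝ → ℝ} (hg : Differentiable ℝ g) :
    energy P (μ.prod ν) (fun p => g p.2) = profileEnergy P ν g := by
  simp only [energy, profileEnergy, norm_fderiv_comp_snd (hg _), sq_abs]
  rw [integral_fun_snd (fun y => deriv g y ^ 2 + if 0 < g y then P y else 0)]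
  simp

lemma integrable_sq_norm_fderiv_comp_snd [IsFiniteMeasure μ] [SFinite ν] {g : ℝ → ℝ}
    (hg : Differentiable ℝ g) (hg' : Integrable (fun y => deriv g y ^ 2) ν) :
    Integrable (fun p => ‖fderiv ℝ (fun q : ℝ × ℝ => g q.2) p‖ ^ 2) (μ.prod ν) := by
  simpa only [norm_fderiv_comp_snd (hg _), sq_abs] using hg'.comp_snd μ

lemma profileEnergy_slice (hu : Differentiable ℝ u) (x : ℝ) :
    profileEnergy P ν (fun y => u (x, y)) =
      ∫ y, (fderiv ℝ u (x, y) (0, 1) ^ 2 + if 0 < u (x, y) then P y else 0) ∂ν := by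
  simp only [profileEnergy, (hu _).hasDerivAt_comp_prodMk_left.deriv]

lemma integral_sq_fderiv_apply_add_le_energy {μ : Measure (ℝ × ℝ)}
    (hDu : Integrable (fun p => ‖fderiv ℝ u p‖ ^ 2) μ)
    (hχ : Integrable (fun p => if 0 < u p then P p.2 else 0) μ) :
    ∫ p, fderiv ℝ u p (1, 0) ^ 2 ∂μ +
        ∫ p, (fderiv ℝ u p (0, 1) ^ 2 + if 0 < u p then P p.2 else 0) ∂μ ≤ energy P μ u := by
  have hmeas := (measurable_fderiv ℝ u).aestronglyMeasurable (μ := μ)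
  have hx := integrable_sq_apply_of_integrable_sq_norm hmeas hDu (1, 0)
  have hG : Integrable (fun p => fderiv ℝ u p (0, 1) ^ 2 + if 0 < u p then P p.2 else 0) μ :=
    (integrable_sq_apply_of_integrable_sq_norm hmeas hDu (0, 1)).add hχ
  rw [← integral_add hx hG]
  refine integral_mono (hx.add hG) (hDu.add hχ) fun p => ?_
  have := sq_apply_add_sq_apply_le_opNorm_sq (fderiv ℝ u p)
  simp only
  linarith

theorem ae_fderiv_apply_eq_zero_of_energy_le_profileEnergy [IsProbabilityMeasure μ] [SFinite ν]
    (hu : Differentiable ℝ u) (hDu : Integrable (fun p => ‖fderiv ℝ u p‖ ^ 2) (μ.prod ν))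
    (hP : Integrable P ν)
    (hle : ∀ᵐ x ∂μ, energy P (μ.prod ν) u ≤ profileEnergy P ν (fun y => u (x, y))) :
    ∀ᵐ p ∂(μ.prod ν), fderiv ℝ u p (1, 0) = 0 := by
  have hχ : Integrable (fun p => if 0 < u p then P p.2 else 0) (μ.prod ν) :=
    (hP.comp_snd μ).ite_pos hu.continuous.measurable
  have hmeas := (measurable_fderiv ℝ u).aestronglyMeasurable (μ := μ.prod ν)
  have hx := integrable_sq_apply_of_integrable_sq_norm hmeas hDu (1, 0)
  have hG : Integrable (fun p => fderiv ℝ u p (0, 1) ^ 2 + if 0 < u p then P p.2 else 0)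
      (μ.prod ν) :=
    (integrable_sq_apply_of_integrable_sq_norm hmeas hDu (0, 1)).add hχ
  have hslices : energy P (μ.prod ν) u ≤
      ∫ p, (fderiv ℝ u p (0, 1) ^ 2 + if 0 < u p then P p.2 else 0) ∂(μ.prod ν) := by
    simp only [profileEnergy_slice hu] at hle
    rw [integral_prod _ hG]
    calc energy P (μ.prod ν) u = ∫ _, energy P (μ.prod ν) u ∂μ := by simp
      _ ≤ _ := integral_mono_ae (integrable_const _) hG.integral_prod_left hle
  have hzero : ∫ p, fderiv ℝ u p (1, 0) ^ 2 ∂(μ.prod ν) = 0 :=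
    le_antisymm (by linarith [integral_sq_fderiv_apply_add_le_energy hDu hχ])
      (integral_nonneg fun p => sq_nonneg _)
  filter_upwards [(integral_eq_zero_iff_of_nonneg (fun p => sq_nonneg _) hx).1 hzero] with p hp
  exact pow_eq_zero_iff two_ne_zero |>.1 hp

lemma ae_eq_comp_snd_of_fderiv_apply_eq_zero [SFinite ν] {a b : ℝ} (hu : Differentiable ℝ u)
    (h : ∀ᵐ p ∂((volume.restrict (Ioo a b)).prod ν), fderiv ℝ u p (1, 0) = 0) :
    ∀ᵐ p ∂((volume.restrict (Ioo a b)).prod ν), u p = u (a, p.2) := by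
  have hmeas₀ : MeasurableSet {p : ℝ × ℝ | fderiv ℝ u p (1, 0) = 0} :=
    measurableSet_eq_fun (measurable_fderiv_apply_const ℝ u _) measurable_const
  have hmeas : MeasurableSet {p : ℝ × ℝ | u p = u (a, p.2)} :=
    measurableSet_eq_fun hu.continuous.measurable
      (hu.continuous.comp (continuous_const.prodMk continuous_snd)).measurable
  have h' := (Measure.ae_ae_comm hmeas₀).1 ((Measure.ae_prod_iff_ae_ae hmeas₀).1 h)
  refine (Measure.ae_prod_iff_ae_ae hmeas).2 ((Measure.ae_ae_comm hmeas).2 ?_)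
  filter_upwards [h'] with y hy
  filter_upwards [ae_restrict_mem measurableSet_Ioo] with x hx
  exact eq_of_hasDerivAt_of_ae_eq_zero hx.1.le (fun t _ => (hu _).hasDerivAt_comp_prodMk_right)
    (ae_restrict_of_ae_restrict_of_subset (Ioc_subset_Ioo_right hx.2) hy)

end Slicing

theorem minimizer_is_one_dimensional_general (A B T : ℝ) (u : ℝ × ℝ → ℝ)
    (hu_diff : Differentiable ℝ u)
    (hu_bdry : ∀ᵐ x : ℝ, u (x, 0) = 1)
    (hu_int : IntegrableOn (fun p : ℝ × ℝ => ‖fderiv ℝ u p‖ ^ 2)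
      (Ioo (0:ℝ) 1 ×ˢ Ioo 0 T))
    (hmin : ∀ v : ℝ × ℝ → ℝ,
      Differentiable ℝ v →
      (∀ x y : ℝ, v (x + 1, y) = v (x, y)) →
      (∀ᵐ x : ℝ, v (x, 0) = 1) →
      IntegrableOn (fun p : ℝ × ℝ => ‖fderiv ℝ v p‖ ^ 2)
        (Ioo (0:ℝ) 1 ×ˢ Ioo 0 T) →
      (∫ p in (Ioo (0:ℝ) 1 ×ˢ Ioo 0 T),
          (‖fderiv ℝ u p‖ ^ 2 + if 0 < u p then max (A - B * p.2) 0 else 0))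
        ≤ ∫ p in (Ioo (0:ℝ) 1 ×ˢ Ioo 0 T),
          (‖fderiv ℝ v p‖ ^ 2 + if 0 < v p then max (A - B * p.2) 0 else 0)) :
    ∃ f : ℝ → ℝ, ∀ᵐ p ∂(volume.restrict (Ioo (0:ℝ) 1 ×ˢ Ioo 0 T)), u p = f p.2 := by
  have hR : volume.restrict (Ioo (0:ℝ) 1 ×ˢ Ioo 0 T) =
      (volume.restrict (Ioo (0:ℝ) 1)).prod (volume.restrict (Ioo 0 T)) := by
    rw [Measure.prod_restrict, ← Measure.volume_eq_prod]
  have : IsProbabilityMeasure (volume.restrict (Ioo (0:ℝ) 1)) := ⟨by simp⟩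
  have hP : Integrable (fun y => max (A - B * y) 0) (volume.restrict (Ioo 0 T)) :=
    (by fun_prop : Continuous fun y : ℝ => max (A - B * y) 0).integrableOn_Icc.mono_set
      Ioo_subset_Icc_self
  simp only [IntegrableOn, hR] at hu_int hmin
  rw [hR]
  refine ⟨fun y => u (0, y), ae_eq_comp_snd_of_fderiv_apply_eq_zero hu_diff
    (ae_fderiv_apply_eq_zero_of_energy_le_profileEnergy hu_diff hu_int hP ?_)⟩
  filter_upwards [ae_restrict_of_ae hu_bdry, hu_int.prod_right_ae] with x hx₀ hx_int
  have hg : Differentiable ℝ fun y => u (x, y) := hu_diff.comp (by fun_prop)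
  have hg' : Integrable (fun y => deriv (fun y => u (x, y)) y ^ 2) (volume.restrict (Ioo 0 T)) := by
    simpa only [(hu_diff _).hasDerivAt_comp_prodMk_left.deriv] using
      integrable_sq_apply_of_integrable_sq_norm (F := fun y => fderiv ℝ u (x, y))
        ((measurable_fderiv ℝ u).comp measurable_prodMk_left).aestronglyMeasurable hx_int (0, 1)
  have hv_int := integrable_sq_norm_fderiv_comp_snd (μ := volume.restrict (Ioo (0:ℝ) 1)) hg hg'
  rw [← energy_comp_snd (μ := volume.restrict (Ioo (0:ℝ) 1)) hg]
  exact hmin (fun p => u (x, p.2)) (hg.comp differentiable_snd) (fun _ _ => rfl)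
    (ae_of_all _ fun _ => hx₀) hv_int

theorem minimizer_is_one_dimensional (A B T : ℝ) (hA : 0 < A) (hB : 0 < B)
    (hT : 0 < T) (u : ℝ × ℝ → ℝ)
    (hu_diff : Differentiable ℝ u)
    (hu_per : ∀ x y : ℝ, u (x + 1, y) = u (x, y))
    (hu_bdry : ∀ᵐ x : ℝ, u (x, 0) = 1)
    (hu_int : IntegrableOn (fun p : ℝ × ℝ => ‖fderiv ℝ u p‖ ^ 2)
      (Ioo (0:ℝ) 1 ×ˢ Ioo 0 T))
    (hmin : ∀ v : ℝ × ℝ → ℝ,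
      Differentiable ℝ v →
      (∀ x y : ℝ, v (x + 1, y) = v (x, y)) →
      (∀ᵐ x : ℝ, v (x, 0) = 1) →
      IntegrableOn (fun p : ℝ × ℝ => ‖fderiv ℝ v p‖ ^ 2)
        (Ioo (0:ℝ) 1 ×ˢ Ioo 0 T) →
      (∫ p in (Ioo (0:ℝ) 1 ×ˢ Ioo 0 T),
          (‖fderiv ℝ u p‖ ^ 2 + if 0 < u p then max (A - B * p.2) 0 else 0))
        ≤ ∫ p in (Ioo (0:ℝ) 1 ×ˢ Ioo 0 T),
          (‖fderiv ℝ v p‖ ^ 2 + if 0 < v p then max (A - B * p.2) 0 else 0)) :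
    ∃ f : ℝ → ℝ, ∀ᵐ p ∂(volume.restrict (Ioo (0:ℝ) 1 ×ˢ Ioo 0 T)), u p = f p.2 :=
  minimizer_is_one_dimensional_general A B T u hu_diff hu_bdry hu_int hmin
end
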